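/- Let u be a term whose only free variable is x and let A be a closed term. If u[x:=A] is unsolvable, then u[x:=Ω] is unsolvable. -/

import Mathlib

/-! ## A de Bruijn presentation of the untyped λ-calculus -/

/-- Untyped λ-terms in de Bruijn representation. -/
inductive Lam : Type where
  | var : ℕ → Lam
  | app : Lam → Lam → Lam
  | abs : Lam → Lam
  deriving DecidableEq

namespace Lam

/-- Lifting of de Bruijn indices (cutoff `d`). -/
def lift (d : ℕ) : Lam → Lam
  | var n => if n < d then var n else var (n + 1)
  | app a b => app (lift d a) (lift d b)
  | abs a => abs (lift (d + 1) a)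

/-- Capture-avoiding substitution of `u` for the free variable `k`. -/
def subst : Lam → ℕ → Lam → Lam
  | var n, k, u => if n = k then u else if k < n then var (n - 1) else var n
  | app a b, k, u => app (subst a k u) (subst b k u)
  | abs a, k, u => abs (subst a (k + 1) (lift 0 u))

/-- One-step β-reduction `▷`. -/
inductive Step : Lam → Lam → Prop
  | beta (a b : Lam) : Step (app (abs a) b) (subst a 0 b)
  | appL {a a' : Lam} (b : Lam) : Step a a' → Step (app a b) (app a' b)
  | appR (a : Lam) {b b' : Lam} : Step b b' → Step (app a b) (app a b')
  | abs {a a' : Lam} : Step a a' → Step (Lam.abs a) (Lam.abs a')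

/-- β-reduction `▷*` : reflexive and transitive closure of `▷`. -/
def Steps : Lam → Lam → Prop := Relation.ReflTransGen Step

/-- β-normal term. -/
def Normal (t : Lam) : Prop := ∀ t', ¬ Step t t'

/-- `Free x t` : the variable `x` (de Bruijn index, seen from the root) occurs free in `t`. -/
def Free : ℕ → Lam → Prop
  | x, var n => x = n
  | x, app a b => Free x a ∨ Free x b
  | x, abs a => Free (x + 1) a

/-- Closed term. -/
def Closed (t : Lam) : Prop := ∀ x, ¬ Free x t

/-- A variable applied to a (possibly empty) list of arguments. -/
inductive HeadVarApp : Lam → Prop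
  | var (n : ℕ) : HeadVarApp (var n)
  | app {a : Lam} (b : Lam) : HeadVarApp a → HeadVarApp (app a b)

/-- Head normal forms `λx₁…λxₙ.(y t₁ … tₘ)`. -/
inductive IsHNF : Lam → Prop
  | head {t : Lam} : HeadVarApp t → IsHNF t
  | abs {a : Lam} : IsHNF a → IsHNF (Lam.abs a)

/-- A term is solvable if it β-reduces to a head normal form. -/
def Solvable (t : Lam) : Prop := ∃ h, Steps t h ∧ IsHNF h

/-- `Ω = (λx.(x x))(λx.(x x))`. -/
def Omega : Lam := app (abs (app (var 0) (var 0))) (abs (app (var 0) (var 0)))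

/-- Ω-reduction `▷_Ω` : replace an unsolvable subterm by `Ω`. -/
inductive OmegaStep : Lam → Lam → Prop
  | unsolv {t : Lam} : ¬ Solvable t → OmegaStep t Omega
  | appL {a a' : Lam} (b : Lam) : OmegaStep a a' → OmegaStep (app a b) (app a' b)
  | appR (a : Lam) {b b' : Lam} : OmegaStep b b' → OmegaStep (app a b) (app a b')
  | abs {a a' : Lam} : OmegaStep a a' → OmegaStep (Lam.abs a) (Lam.abs a')

/-- `▷_Ω*`. -/
def OmegaSteps : Lam → Lam → Prop := Relation.ReflTransGen OmegaStep

/-- `▷_{βΩ}` : union of `▷` and `▷_Ω`. -/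
def BOStep (t t' : Lam) : Prop := Step t t' ∨ OmegaStep t t'

/-- `▷_{βΩ}*`. -/
def BOSteps : Lam → Lam → Prop := Relation.ReflTransGen BOStep

/-- `u ≃ v` : equality in the λ-theory H (common `▷_{βΩ}*`-reduct). -/
def SimH (u v : Lam) : Prop := ∃ w, BOSteps u w ∧ BOSteps v w

/-- Simultaneous (parallel) substitution along `σ`. -/
def psubst (σ : ℕ → Lam) : Lam → Lam
  | var n => σ n
  | app a b => app (psubst σ a) (psubst σ b)
  | abs a => abs (psubst (fun n => match n with | 0 => var 0 | m + 1 => lift 0 (σ m)) a)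

/-- `(x V)` : the application of a head `h` to a list of arguments. -/
def mkApps (h : Lam) (as : List Lam) : Lam := as.foldl app h

/-- `U ⊑ V` : some initial segment of `V` is obtained from `U` by a substitution
followed by componentwise β-reductions. -/
def Sqsubseteq (U V : List Lam) : Prop :=
  ∃ (σ : ℕ → Lam) (W : List Lam), W <+: V ∧
    List.Forall₂ (fun u w => Steps (psubst σ u) w) U W

/-! ### Occurrences as positions -/

/-- Directions inside a term. -/
inductive Dir : Type where
  | left | right | down
  deriving DecidableEq

/-- Positions (occurrences) in a term. -/
abbrev Pos := List Dir

/-- The subterm of `t` at position `p` (if any). -/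
def subtermAt : Lam → Pos → Option Lam
  | t, [] => some t
  | app a _, Dir.left :: p => subtermAt a p
  | app _ b, Dir.right :: p => subtermAt b p
  | abs a, Dir.down :: p => subtermAt a p
  | _, _ :: _ => none

/-- Replace the subterm of `t` at position `p` by `s` (if the position exists). -/
def replaceAt : Lam → Pos → Lam → Option Lam
  | _, [], s => some s
  | app a b, Dir.left :: p, s => (replaceAt a p s).map (fun a' => app a' b)
  | app a b, Dir.right :: p, s => (replaceAt b p s).map (fun b' => app a b')
  | abs a, Dir.down :: p, s => (replaceAt a p s).map Lam.abs
  | _, _ :: _, _ => none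

/-- `OccOf x t p` : position `p` is an occurrence in `t` of the free variable `x`
(index seen from the root, hence shifted by the number of binders crossed). -/
def OccOf (x : ℕ) (t : Lam) (p : Pos) : Prop :=
  subtermAt t p = some (var (x + p.count Dir.down))

/-- `ArgOf t p V` : `V` is the maximal list of arguments, in `t`, of the occurrence
sitting at position `p`; i.e. `([] V)` is the applicative context of that occurrence. -/
def ArgOf (t : Lam) (p : Pos) (V : List Lam) : Prop :=
  ∃ (q : Pos) (h : Lam),
    p = q ++ List.replicate V.length Dir.left ∧
    (∀ q' : Pos, q ≠ q' ++ [Dir.left]) ∧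
    subtermAt t q = some (mkApps h V) ∧ subtermAt t p = some h

/-- `InArgOfOcc x t p q` : `q` is an occurrence of `x` in `t` and the position `p` lies
inside one of the elements of `Arg(x_[q], t)`. -/
def InArgOfOcc (x : ℕ) (t : Lam) (p q : Pos) : Prop :=
  OccOf x t q ∧ ∃ (r : Pos) (n : ℕ),
    q = r ++ List.replicate n Dir.left ∧
    (∀ r' : Pos, r ≠ r' ++ [Dir.left]) ∧
    ∃ (j : ℕ) (s : Pos), j < n ∧ p = r ++ List.replicate j Dir.left ++ Dir.right :: s

/-- The occurrence `p` of `x` is pure in `t` : no other occurrence `q` of `x` in `t`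
is such that `p` occurs in one of the elements of `Arg(x_[q], t)`. -/
def PureOcc (x : ℕ) (t : Lam) (p : Pos) : Prop :=
  OccOf x t p ∧ ∀ q, q ≠ p → ¬ InArgOfOcc x t p q

/-- Renaming of the free variable `y` into `x`. -/
def rename (y x : ℕ) : Lam → Lam
  | var n => if n = y then var x else var n
  | app a b => app (rename y x a) (rename y x b)
  | abs a => abs (rename (y + 1) (x + 1) a)

/-- `Residue x u v p p'` : along some β-reduction from `u` to `v`, the occurrence `p'` of
`x` in `v` is a residue (traced copy) of the occurrence `p` of `x` in `u`.  This is
expressed by marking the occurrence `p` of `x` with a fresh variable `y` and tracing the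
occurrences of `y`. -/
def Residue (x : ℕ) (u v : Lam) (p p' : Pos) : Prop :=
  ∃ (y : ℕ) (u₀ v₀ : Lam),
    ¬ Free y u ∧
    replaceAt u p (var (y + p.count Dir.down)) = some u₀ ∧
    Steps u₀ v₀ ∧ rename y x v₀ = v ∧ OccOf y v₀ p'

/-- The occurrence `p` of the free variable `0` ("x") in `G` is good with respect to the
closed term `A` : it is pure in `G` and `u[x:=A]` is solvable for every subterm `u` of
`G` in which this occurrence occurs. -/
def GoodOcc (A G : Lam) (p : Pos) : Prop :=
  PureOcc 0 G p ∧
    ∀ (q : Pos) (u : Lam), q <+: p → subtermAt G q = some u →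
      Solvable (subst u (q.count Dir.down) A)

/-! ### Miscellaneous -/

/-- A fixed effective Gödel numbering of λ-terms. -/
def code : Lam → ℕ
  | var n => Nat.pair 0 n
  | app a b => Nat.pair 1 (Nat.pair (code a) (code b))
  | abs a => Nat.pair 2 (code a)

/-- Body `f^k z` of the Church numeral. -/
def churchBody : ℕ → Lam
  | 0 => var 0
  | k + 1 => app (var 1) (churchBody k)

/-- The Church numeral `c_k = λf λz.(f^k z)`. -/
def church (k : ℕ) : Lam := abs (abs (churchBody k))

/-- `n`-fold abstraction `λx₁…λxₙ.t`. -/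
def absN : ℕ → Lam → Lam
  | 0, t => t
  | n + 1, t => abs (absN n t)

/-- Number of symbols of a term. -/
def size : Lam → ℕ
  | var _ => 1
  | app a b => size a + size b + 1
  | abs a => size a + 1

/-- Subterm relation. -/
inductive Subterm : Lam → Lam → Prop
  | refl (t : Lam) : Subterm t t
  | appL {s a : Lam} (b : Lam) : Subterm s a → Subterm s (app a b)
  | appR (a : Lam) {s b : Lam} : Subterm s b → Subterm s (app a b)
  | abs {s a : Lam} : Subterm s a → Subterm s (Lam.abs a)

/-- `t` contains no subterm of the form `(x u)` for the free variable `x`. -/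
def NoVarApp : ℕ → Lam → Prop
  | _, var _ => True
  | x, app a b => a ≠ var x ∧ NoVarApp x a ∧ NoVarApp x b
  | x, abs a => NoVarApp (x + 1) a

/-- Headed by the variable `d` : term of the form `(x V)` with `x = var d`. -/
inductive Headed : ℕ → Lam → Prop
  | var (d : ℕ) : Headed d (var d)
  | app {d : ℕ} {a : Lam} (b : Lam) : Headed d a → Headed d (app a b)

end Lam

/-!
Ω is closed, is not an abstraction, and reduces only to itself. Hence its copies in `u[x:=Ω]`
never take part in a redex, and every reduct of `u[x:=Ω]` has the form `w[x:=Ω]` with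
`u ▷* w`. Since Ω is not a head normal form, `x` cannot be the head variable of `w` when
`w[x:=Ω]` is one, so `w[x:=A]` is a head normal form too; and `u[x:=A] ▷* w[x:=A]` because
reduction commutes with substitution of a closed term.
-/

namespace Lam

lemma subst_var_self (k : ℕ) (u : Lam) : subst (var k) k u = u := by simp [subst]

lemma subst_var_of_lt {m k : ℕ} (h : m < k) (u : Lam) : subst (var m) k u = var m := by
  simp [subst, h.ne, h.not_gt]

lemma subst_var_of_gt {m k : ℕ} (h : k < m) (u : Lam) : subst (var m) k u = var (m - 1) := by
  simp [subst, h.ne', h]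

lemma subst_var_of_ne {m k : ℕ} (h : m ≠ k) (u : Lam) :
    subst (var m) k u = var (if k < m then m - 1 else m) := by
  simp only [subst, if_neg h]
  split_ifs <;> rfl

lemma lift_var_of_lt {m d : ℕ} (h : m < d) : lift d (var m) = var m := by
  simp [lift, h]

lemma lift_var_of_ge {m d : ℕ} (h : d ≤ m) : lift d (var m) = var (m + 1) := by
  simp [lift, h.not_gt]

lemma lift_of_free_lt : ∀ {t : Lam} {d : ℕ}, (∀ x, Free x t → x < d) → lift d t = t
  | var _, _, h => lift_var_of_lt (h _ rfl)
  | app _ _, _, h => by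
    rw [lift, lift_of_free_lt fun x hx => h x (.inl hx), lift_of_free_lt fun x hx => h x (.inr hx)]
  | abs _, _, h => by
    rw [lift, lift_of_free_lt fun
      | 0, _ => Nat.succ_pos _
      | x + 1, hx => Nat.succ_lt_succ (h x hx)]

lemma subst_of_free_lt : ∀ {t : Lam} {k : ℕ} (u : Lam), (∀ x, Free x t → x < k) → subst t k u = t
  | var _, _, u, h => subst_var_of_lt (h _ rfl) u
  | app _ _, _, u, h => by
    rw [subst, subst_of_free_lt u fun x hx => h x (.inl hx),
      subst_of_free_lt u fun x hx => h x (.inr hx)]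
  | abs _, _, u, h => by
    rw [subst, subst_of_free_lt _ fun
      | 0, _ => Nat.succ_pos _
      | x + 1, hx => Nat.succ_lt_succ (h x hx)]

lemma Closed.lift_eq {c : Lam} (hc : Closed c) (d : ℕ) : lift d c = c :=
  lift_of_free_lt fun x hx => absurd hx (hc x)

lemma Closed.subst_eq {c : Lam} (hc : Closed c) (k : ℕ) (u : Lam) : subst c k u = c :=
  subst_of_free_lt u fun x hx => absurd hx (hc x)

lemma subst_lift_of_closed {c : Lam} (hc : Closed c) :
    ∀ (t : Lam) {d k : ℕ}, d ≤ k → subst (lift d t) (k + 1) c = lift d (subst t k c)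
  | var n, d, k, hdk => by
    rcases lt_or_ge n d with hnd | hnd
    · rw [lift_var_of_lt hnd, subst_var_of_lt (by omega), subst_var_of_lt (by omega),
        lift_var_of_lt hnd]
    rw [lift_var_of_ge hnd]
    rcases lt_trichotomy n k with hnk | rfl | hnk
    · rw [subst_var_of_lt (by omega), subst_var_of_lt hnk, lift_var_of_ge hnd]
    · rw [subst_var_self, subst_var_self, hc.lift_eq]
    · rw [subst_var_of_gt (by omega), subst_var_of_gt hnk, lift_var_of_ge (by omega)]
      congr 1
      omega
  | app a b, d, k, hdk => by
    simp only [lift, subst, subst_lift_of_closed hc a hdk, subst_lift_of_closed hc b hdk]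
  | abs a, d, k, hdk => by
    simp only [lift, subst, hc.lift_eq, subst_lift_of_closed hc a (Nat.succ_le_succ hdk)]

lemma subst_subst_of_closed {c : Lam} (hc : Closed c) :
    ∀ (t b : Lam) {i k : ℕ}, i ≤ k →
      subst (subst t i b) k c = subst (subst t (k + 1) c) i (subst b k c)
  | var n, b, i, k, hik => by
    rcases lt_trichotomy n i with hni | rfl | hni
    · rw [subst_var_of_lt hni, subst_var_of_lt (by omega), subst_var_of_lt (by omega),
        subst_var_of_lt hni]
    · rw [subst_var_self, subst_var_of_lt (by omega), subst_var_self]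
    rcases lt_trichotomy n (k + 1) with hnk | rfl | hnk
    · rw [subst_var_of_gt hni, subst_var_of_lt (by omega), subst_var_of_lt hnk,
        subst_var_of_gt hni]
    · rw [subst_var_of_gt hni, Nat.add_sub_cancel, subst_var_self, subst_var_self,
        hc.subst_eq]
    · rw [subst_var_of_gt hni, subst_var_of_gt (by omega), subst_var_of_gt hnk,
        subst_var_of_gt (by omega)]
  | app a a', b, i, k, hik => by
    simp only [subst, subst_subst_of_closed hc a b hik, subst_subst_of_closed hc a' b hik]
  | abs a, b, i, k, hik => by
    simp only [subst, hc.lift_eq, ← subst_lift_of_closed hc b (Nat.zero_le k),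
      subst_subst_of_closed hc a (lift 0 b) (Nat.succ_le_succ hik)]

lemma Step.subst_of_closed {c : Lam} (hc : Closed c) {a a' : Lam} (h : Step a a') (k : ℕ) :
    Step (subst a k c) (subst a' k c) := by
  induction h generalizing k with
  | beta t b =>
    rw [subst_subst_of_closed hc t b (Nat.zero_le k)]
    simpa only [subst, hc.lift_eq] using Step.beta (subst t (k + 1) c) (subst b k c)
  | appL b _ ih => exact .appL _ (ih k)
  | appR a _ ih => exact .appR _ (ih k)
  | abs _ ih =>
    simp only [subst, hc.lift_eq]
    exact .abs (ih (k + 1))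

lemma Steps.subst_of_closed {c : Lam} (hc : Closed c) {a a' : Lam} (h : Steps a a') (k : ℕ) :
    Steps (subst a k c) (subst a' k c) :=
  h.lift (subst · k c) fun _ _ hs => hs.subst_of_closed hc k

lemma Steps.appL {a a' : Lam} (b : Lam) (h : Steps a a') : Steps (app a b) (app a' b) :=
  h.lift (app · b) fun _ _ => Step.appL b

lemma Steps.appR (a : Lam) {b b' : Lam} (h : Steps b b') : Steps (app a b) (app a b') :=
  h.lift (app a ·) fun _ _ => Step.appR a

lemma Steps.abs {a a' : Lam} (h : Steps a a') : Steps (abs a) (abs a') :=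
  h.lift Lam.abs fun _ _ => Step.abs

lemma not_headVarApp_abs (t : Lam) : ¬ HeadVarApp (abs t) := nofun

lemma HeadVarApp.of_subst {s : Lam} (hs : ¬ HeadVarApp s) :
    ∀ {w : Lam} {k : ℕ}, HeadVarApp (subst w k s) → ∀ c, HeadVarApp (subst w k c)
  | Lam.var n, k, hw, c => by
    by_cases hnk : n = k
    · rw [hnk, subst_var_self] at hw
      exact absurd hw hs
    · rw [subst_var_of_ne hnk]
      exact .var _
  | Lam.app a b, k, .app _ ha, c => .app _ (HeadVarApp.of_subst hs ha c)
  | Lam.abs a, k, hw, c => absurd hw (not_headVarApp_abs _)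

lemma IsHNF.of_subst {s : Lam} (hs : Closed s) (hns : ¬ IsHNF s) :
    ∀ {w : Lam} {k : ℕ}, IsHNF (subst w k s) → ∀ c, IsHNF (subst w k c)
  | Lam.var n, k, hw, c => by
    by_cases hnk : n = k
    · rw [hnk, subst_var_self] at hw
      exact absurd hw hns
    · rw [subst_var_of_ne hnk]
      exact .head (.var _)
  | Lam.app a b, k, .head hw, c => .head (HeadVarApp.of_subst (fun h => hns (.head h)) hw c)
  | Lam.abs a, k, .head hw, c => absurd hw (not_headVarApp_abs _)
  | Lam.abs a, k, .abs hw, c => by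
    rw [hs.lift_eq] at hw
    exact .abs (IsHNF.of_subst hs hns hw _)

lemma Omega_closed : Closed Omega := by
  simp [Closed, Omega, Free]

lemma Omega_not_isHNF : ¬ IsHNF Omega
  | .head (.app _ h) => not_headVarApp_abs _ h

lemma eq_Omega_of_step_Omega : ∀ {t : Lam}, Step Omega t → t = Omega
  | _, .beta _ _ => rfl
  | _, .appL _ (.abs (.appL _ h)) | _, .appL _ (.abs (.appR _ h))
  | _, .appR _ (.abs (.appL _ h)) | _, .appR _ (.abs (.appR _ h)) => nomatch h

lemma eq_abs_of_subst_Omega_eq_abs {w t : Lam} {k : ℕ} (h : subst w k Omega = abs t) :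
    ∃ a, w = abs a ∧ t = subst a (k + 1) Omega := by
  rcases w with n | _ | a
  · by_cases hnk : n = k
    · rw [hnk, subst_var_self] at h
      cases h
    · rw [subst_var_of_ne hnk] at h
      cases h
  · cases h
  · rw [subst, Omega_closed.lift_eq, abs.injEq] at h
    exact ⟨a, rfl, h.symm⟩

lemma exists_steps_of_step_subst_Omega :
    ∀ {w t : Lam} {k : ℕ}, Step (subst w k Omega) t → ∃ w', Steps w w' ∧ t = subst w' k Omega
  | var n, t, k, h => by
    by_cases hnk : n = k
    · subst hnk
      rw [subst_var_self] at h
      exact ⟨var n, .refl, by rw [eq_Omega_of_step_Omega h, subst_var_self]⟩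
    · rw [subst_var_of_ne hnk] at h
      cases h
  | app a b, t, k, h => by
    rw [subst] at h
    generalize ha : subst a k Omega = a₀ at h
    generalize hb : subst b k Omega = b₀ at h
    rcases h with ⟨a₁, _⟩ | ⟨_, hstep⟩ | ⟨_, hstep⟩
    · obtain ⟨a₂, rfl, rfl⟩ := eq_abs_of_subst_Omega_eq_abs ha
      subst hb
      exact ⟨subst a₂ 0 b, .single (.beta a₂ b),
        (subst_subst_of_closed Omega_closed a₂ b (Nat.zero_le k)).symm⟩
    · subst ha hb
      obtain ⟨a', ha', rfl⟩ := exists_steps_of_step_subst_Omega hstep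
      exact ⟨app a' b, ha'.appL b, rfl⟩
    · subst ha hb
      obtain ⟨b', hb', rfl⟩ := exists_steps_of_step_subst_Omega hstep
      exact ⟨app a b', hb'.appR a, rfl⟩
  | abs a, t, k, h => by
    rw [subst, Omega_closed.lift_eq] at h
    rcases h with _ | _ | _ | ⟨h⟩
    obtain ⟨a', ha', rfl⟩ := exists_steps_of_step_subst_Omega h
    exact ⟨abs a', ha'.abs, by rw [subst, Omega_closed.lift_eq]⟩

lemma exists_steps_of_steps_subst_Omega {w t : Lam} {k : ℕ} (h : Steps (subst w k Omega) t) :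
    ∃ w', Steps w w' ∧ t = subst w' k Omega := by
  induction h with
  | refl => exact ⟨w, .refl, rfl⟩
  | tail _ hstep ih =>
    obtain ⟨w₁, hw₁, rfl⟩ := ih
    obtain ⟨w₂, hw₂, rfl⟩ := exists_steps_of_step_subst_Omega hstep
    exact ⟨w₂, hw₁.trans hw₂, rfl⟩

end Lam

open Lam in
theorem unsolvable_subst_omega_general (u A : Lam)
    (hA : Closed A)
    (h : ¬ Solvable (subst u 0 A)) :
    ¬ Solvable (subst u 0 Omega) := by
  rintro ⟨v, hv, hnf⟩
  obtain ⟨w, hw, rfl⟩ := exists_steps_of_steps_subst_Omega hv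
  exact h ⟨subst w 0 A, hw.subst_of_closed hA 0, hnf.of_subst Omega_closed Omega_not_isHNF A⟩

open Lam in
/-- if `u` has `x` (index `0`) as its only free variable, `A` is closed
and `u[x:=A]` is unsolvable, then `u[x:=Ω]` is unsolvable. -/
theorem unsolvable_subst_omega (u A : Lam)
    (honly : ∀ y, Free y u → y = 0) (hA : Closed A)
    (h : ¬ Solvable (subst u 0 A)) :
    ¬ Solvable (subst u 0 Omega) :=
  unsolvable_subst_omega_general u A hA h
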